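/- If Θ is a standard s-substitution and p a state over its parameters, then the partial evaluation ψ_p(Θ) is an extended s-substitution (its domain variable expressions are pairwise not parameter-unifiable), and for every parameter assignment σ satisfying p, Θ[σ] = ψ_p(Θ)[σ]. -/

import Mathlib

/- Arguments of standard variable expressions: each argument is of one of the forms
   nᵢ, p(nᵢ), s(nᵢ), or a numeral (0̄, 1̄, 2̄, …). -/
inductive Arg where
  | nvar (i : ℕ)
  | pArg (i : ℕ)
  | sArg (i : ℕ)
  | lit (k : ℕ)
deriving DecidableEq

/-- Evaluation of arguments under a parameter assignment: s is successor, p is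
    truncated predecessor. -/
def Arg.eval (σ : ℕ → ℕ) : Arg → ℕ
  | .nvar i => σ i
  | .pArg i => σ i - 1
  | .sArg i => σ i + 1
  | .lit k => k

/-- A state assigns to each parameter one of three conditions:
    0 : nᵢ = 0,  1 : nᵢ ≠ 0 ∧ nᵢ − 1 = 0 (i.e. nᵢ = 1),  2 : nᵢ ≠ 0 ∧ nᵢ − 1 ≠ 0. -/
abbrev State := ℕ → Fin 3

def SatState (p : State) (σ : ℕ → ℕ) : Prop :=
  ∀ i, (p i = 0 → σ i = 0) ∧ (p i = 1 → σ i = 1) ∧ (p i = 2 → 2 ≤ σ i)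

/-- Partial evaluation ψ_p on arguments. -/
def psiArg (p : State) : Arg → Arg
  | .nvar i => if p i = 0 then .lit 0 else if p i = 1 then .lit 1 else .nvar i
  | .pArg i => if p i = 0 then .lit 0 else if p i = 1 then .lit 0 else .pArg i
  | .sArg i => if p i = 0 then .lit 1 else if p i = 1 then .lit 2 else .sArg i
  | .lit k => .lit k

/- Standard schematic terms: constants, variable expressions X(r₁,…,r_k) with standard
   arguments, applications of function symbols, and applications of defined schematic
   term symbols (with individual and numeric arguments). -/
inductive STm where
  | cst (c : ℕ)
  | vexp (X : ℕ) (args : List Arg)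
  | app (f : ℕ) (ts : List STm)
  | defd (d : ℕ) (ts : List STm) (as : List Arg)


/- First-order terms: variables X(k₁,…,k_m) (members of variable classes at numeral
   indices), constants and applications; defined symbols with evaluated numeric
   arguments are treated homomorphically. -/
inductive FTm where
  | fvar (X : ℕ) (vals : List ℕ)
  | cst (c : ℕ)
  | app (f : ℕ) (ts : List FTm)
  | defd (d : ℕ) (ts : List FTm) (ks : List ℕ)

/-- Evaluation of a schematic term under a parameter assignment. -/
def evalST (σ : ℕ → ℕ) : STm → FTm
  | .cst c => .cst c
  | .vexp X as => .fvar X (as.map (Arg.eval σ))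
  | .app f ts => .app f (ts.attach.map fun x => evalST σ x.1)
  | .defd d ts as => .defd d (ts.attach.map fun x => evalST σ x.1) (as.map (Arg.eval σ))
decreasing_by all_goals (simp_wf; have := List.sizeOf_lt_of_mem x.2; omega)

/-- Partial evaluation ψ_p on schematic terms (homomorphic extension). -/
def psiT (p : State) : STm → STm
  | .cst c => .cst c
  | .vexp X as => .vexp X (as.map (psiArg p))
  | .app f ts => .app f (ts.attach.map fun x => psiT p x.1)
  | .defd d ts as => .defd d (ts.attach.map fun x => psiT p x.1) as
decreasing_by all_goals (simp_wf; have := List.sizeOf_lt_of_mem x.2; omega)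

/-- Variable expressions. -/
abbrev VExp := ℕ × List Arg

/-- Evaluation of a variable expression to a first-order variable. -/
def evalV (σ : ℕ → ℕ) (V : VExp) : ℕ × List ℕ := (V.1, V.2.map (Arg.eval σ))

/-- Two variable expressions are not parameter-unifiable if no parameter assignment
    makes them evaluate to the same variable. -/
def NotPUnif (V W : VExp) : Prop := ∀ σ : ℕ → ℕ, evalV σ V ≠ evalV σ W

/-- s-substitutions: finite lists of (variable expression ↦ schematic term). -/
abbrev Subst := List (VExp × STm)

/-- First-order substitutions: finite lists of (first-order variable ↦ first-order term). -/
abbrev FSub := List ((ℕ × List ℕ) × FTm)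

/-- σ-evaluation Θ[σ] of an s-substitution. -/
def evalSub (σ : ℕ → ℕ) (Θ : Subst) : FSub :=
  Θ.map fun q => (evalV σ q.1, evalST σ q.2)

/-- Partial evaluation ψ_p of an s-substitution. -/
def psiSub (p : State) (Θ : Subst) : Subst :=
  Θ.map fun q => ((q.1.1, q.1.2.map (psiArg p)), psiT p q.2)

def lookupV (Θ : Subst) (V : VExp) : Option STm :=
  (Θ.find? fun q => q.1 = V).map (·.2)

/-- Syntactic application of an s-substitution to a schematic term (replacing
    syntactically matching variable expressions). -/
def applySub (Θ : Subst) : STm → STm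
  | .cst c => .cst c
  | .vexp X as => (lookupV Θ (X, as)).getD (.vexp X as)
  | .app f ts => .app f (ts.attach.map fun x => applySub Θ x.1)
  | .defd d ts as => .defd d (ts.attach.map fun x => applySub Θ x.1) as
decreasing_by all_goals (simp_wf; have := List.sizeOf_lt_of_mem x.2; omega)

def lookupF (θ : FSub) (V : ℕ × List ℕ) : Option FTm :=
  (θ.find? fun q => q.1 = V).map (·.2)

/-- Application of a first-order substitution to a first-order term. -/
def applyFSub (θ : FSub) : FTm → FTm
  | .fvar X vs => (lookupF θ (X, vs)).getD (.fvar X vs)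
  | .cst c => .cst c
  | .app f ts => .app f (ts.attach.map fun x => applyFSub θ x.1)
  | .defd d ts ks => .defd d (ts.attach.map fun x => applyFSub θ x.1) ks
decreasing_by all_goals (simp_wf; have := List.sizeOf_lt_of_mem x.2; omega)

/-- A standard s-substitution: domain variable expressions are pairwise not
    parameter-unifiable. -/
def StandardSub (Θ : Subst) : Prop := Θ.Pairwise fun q r => NotPUnif q.1 r.1

def stateAssign (p : State) (σ : ℕ → ℕ) : ℕ → ℕ := fun i =>
  if p i = 0 then 0 else if p i = 1 then 1 else σ i

lemma stateAssign_eq_of_satState {p : State} {σ : ℕ → ℕ} (h : SatState p σ) :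
    stateAssign p σ = σ := by
  funext i
  unfold stateAssign
  split_ifs with h0 h1
  · exact ((h i).1 h0).symm
  · exact ((h i).2.1 h1).symm
  · rfl

lemma Arg.eval_psiArg (p : State) (σ : ℕ → ℕ) (a : Arg) :
    Arg.eval σ (psiArg p a) = Arg.eval (stateAssign p σ) a := by
  cases a <;> simp only [psiArg, stateAssign, Arg.eval] <;> split_ifs <;> simp

lemma evalV_psiArg (p : State) (σ : ℕ → ℕ) (V : VExp) :
    evalV σ (V.1, V.2.map (psiArg p)) = evalV (stateAssign p σ) V := by
  simp only [evalV, List.map_map]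
  exact congrArg _ (List.map_congr_left fun a _ => Arg.eval_psiArg p σ a)

lemma evalST_app (σ : ℕ → ℕ) (f : ℕ) (ts : List STm) :
    evalST σ (.app f ts) = .app f (ts.map (evalST σ)) := by
  rw [evalST, List.attach_map_val]

lemma evalST_defd (σ : ℕ → ℕ) (d : ℕ) (ts : List STm) (as : List Arg) :
    evalST σ (.defd d ts as) = .defd d (ts.map (evalST σ)) (as.map (Arg.eval σ)) := by
  rw [evalST, List.attach_map_val]

lemma psiT_app (p : State) (f : ℕ) (ts : List STm) :
    psiT p (.app f ts) = .app f (ts.map (psiT p)) := by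
  rw [psiT, List.attach_map_val]

lemma psiT_defd (p : State) (d : ℕ) (ts : List STm) (as : List Arg) :
    psiT p (.defd d ts as) = .defd d (ts.map (psiT p)) as := by
  rw [psiT, List.attach_map_val]

/- Unlike `evalV_psiArg`, this needs `SatState p σ`: `psiT` leaves the numeric arguments
   of defined symbols untouched. -/
lemma evalST_psiT {p : State} {σ : ℕ → ℕ} (h : SatState p σ) (t : STm) :
    evalST σ (psiT p t) = evalST σ t := by
  induction t using psiT.induct with
  | case1 c => simp [psiT, evalST]
  | case2 X as =>
      simp only [psiT, evalST, List.map_map]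
      congr 1
      refine List.map_congr_left fun a _ => ?_
      simp only [Function.comp, Arg.eval_psiArg, stateAssign_eq_of_satState h]
  | case3 f ts ih =>
      rw [psiT_app, evalST_app, evalST_app, List.map_map]
      exact congrArg _ (List.map_congr_left fun t ht => ih ⟨t, ht⟩)
  | case4 d ts as ih =>
      rw [psiT_defd, evalST_defd, evalST_defd, List.map_map]
      congr 1
      exact List.map_congr_left fun t ht => ih ⟨t, ht⟩

/-- A unifier of two partially evaluated domain expressions yields, via `stateAssign`,
    a unifier of the original ones. -/
theorem StandardSub.psiSub {Θ : Subst} (hΘ : StandardSub Θ) (p : State) :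
    StandardSub (psiSub p Θ) := by
  unfold StandardSub _root_.psiSub
  rw [List.pairwise_map]
  refine hΘ.imp fun hqr σ hEq => hqr (stateAssign p σ) ?_
  rwa [← evalV_psiArg, ← evalV_psiArg]

lemma evalSub_psiSub {p : State} {σ : ℕ → ℕ} (h : SatState p σ) (Θ : Subst) :
    evalSub σ (psiSub p Θ) = evalSub σ Θ := by
  unfold evalSub psiSub
  rw [List.map_map]
  refine List.map_congr_left fun q _ => ?_
  simp only [Function.comp, evalV_psiArg, stateAssign_eq_of_satState h, evalST_psiT h]

/-- if Θ is a standard s-substitution and p a state, then ψ_p(Θ) is an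
    extended s-substitution (its domain variable expressions are pairwise not
    parameter-unifiable), and for every parameter assignment σ satisfying p,
    Θ[σ] = ψ_p(Θ)[σ]. -/
theorem psi_of_standard_substitution (Θ : Subst) (hΘ : StandardSub Θ) (p : State) :
    StandardSub (psiSub p Θ) ∧
      ∀ σ : ℕ → ℕ, SatState p σ → evalSub σ Θ = evalSub σ (psiSub p Θ) :=
  ⟨hΘ.psiSub p, fun _ hσ => (evalSub_psiSub hσ Θ).symm⟩
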